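/- arXiv:1511.04652 — 5 statements merged into one kernel-verified Lean document; each statement's English description precedes it below -/
import Mathlib

section
/- Let C be an N×N matrix over the tropical (min-plus) semifield 𝕋 = ℚ ∪ {+∞}, with C ≠ (+∞) in the 1×1 case, i.e. C has at least one finite entry, and suppose C is irreducible (its adjacency digraph is strongly connected). Then there exists a rational number Λ and a vector V ∈ ℚ^N such that min_j (C_{ij} + V_j) = Λ + V_i for every i. -/
/-!
Let `Λ` be the least mean weight of a cycle of the digraph of `C`; cycles of length at most
`N + 1` suffice, because a longer closed walk repeats a vertex among its first `N + 2`
positions and so splits into a shorter closed walk and a cycle. After subtracting `Λ` from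
every entry no cycle has negative weight and some cycle through a vertex `k` has weight `0`.
Take `V i` to be the least weight of a walk of positive length from `k` to `i`. Appending an
arc `j → i` to a walk ending at `j` gives `C i j + V j ≥ V i`, and the last arc of an optimal
walk to `i` gives equality; when that walk is a single arc out of `k`, the empty walk at `k`
is matched by `V k = 0`. Irreducibility makes every `V i` finite.
-/

/-- Irreducibility of a tropical (min-plus) matrix: the adjacency digraph, which has
an arc `j → i` whenever `C i j ≠ ⊤`, is strongly connected. -/
def TropIrreducible {N : ℕ} (C : Matrix (Fin N) (Fin N) (WithTop ℚ)) : Prop :=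
  ∀ i j : Fin N, Relation.ReflTransGen (fun a b => C b a ≠ ⊤) i j

open Finset

lemma Finset.inf'_add_right {ι M : Type*} [LinearOrder M] [Add M] [AddRightMono M]
    (s : Finset ι) (hs : s.Nonempty) (f : ι → M) (a : M) :
    s.inf' hs f + a = s.inf' hs fun i => f i + a :=
  apply_inf'_eq_inf'_comp hs (· + a) fun x y => (min_add_add_right x y a).symm

lemma exists_lt_le_card_map_eq {ι : Type*} [Fintype ι] (w : ℕ → ι) :
    ∃ a b, a < b ∧ b ≤ Fintype.card ι ∧ w a = w b := by
  obtain ⟨x, y, hxy, hw⟩ := Fintype.exists_ne_map_eq_of_card_lt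
    (fun t : Fin (Fintype.card ι + 1) => w t) (by simp)
  rcases lt_or_gt_of_ne (Fin.val_injective.ne hxy) with h | h
  · exact ⟨x, y, h, Nat.lt_succ_iff.mp y.2, hw⟩
  · exact ⟨y, x, h, Nat.lt_succ_iff.mp x.2, hw.symm⟩

variable {ι : Type*} [Fintype ι] [DecidableEq ι] [Nonempty ι]

/-- `minPlusPow C n i j` is the least weight of a walk of length `n` from `j` to `i`, an arc
`k → l` having weight `C l k`; it is `⊤` when there is no such walk. -/
def minPlusPow (C : Matrix ι ι (WithTop ℚ)) : ℕ → Matrix ι ι (WithTop ℚ)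
  | 0 => fun i j => if i = j then 0 else ⊤
  | n + 1 => fun i j => univ.inf' univ_nonempty fun k => C i k + minPlusPow C n k j

variable {C : Matrix ι ι (WithTop ℚ)}

@[simp]
lemma minPlusPow_zero_self (i : ι) : minPlusPow C 0 i i = 0 := by simp [minPlusPow]

lemma minPlusPow_zero_of_ne {i j : ι} (h : i ≠ j) : minPlusPow C 0 i j = ⊤ := by
  simp [minPlusPow, h]

lemma minPlusPow_succ_le (n : ℕ) (i j k : ι) :
    minPlusPow C (n + 1) i j ≤ C i k + minPlusPow C n k j :=
  inf'_le _ (mem_univ k)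

lemma exists_minPlusPow_succ_eq (n : ℕ) (i j : ι) :
    ∃ k, minPlusPow C (n + 1) i j = C i k + minPlusPow C n k j := by
  obtain ⟨k, -, hk⟩ := exists_mem_eq_inf' univ_nonempty fun k => C i k + minPlusPow C n k j
  exact ⟨k, hk⟩

lemma minPlusPow_add_le (m n : ℕ) (i j k : ι) :
    minPlusPow C (m + n) i j ≤ minPlusPow C m i k + minPlusPow C n k j := by
  induction m generalizing i with
  | zero =>
    by_cases hik : i = k
    · subst hik; simp
    · simp [minPlusPow_zero_of_ne hik]
  | succ m ih =>
    obtain ⟨l, hl⟩ := exists_minPlusPow_succ_eq m i k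
    calc minPlusPow C (m + 1 + n) i j = minPlusPow C (m + n + 1) i j := by rw [Nat.succ_add]
      _ ≤ C i l + minPlusPow C (m + n) l j := minPlusPow_succ_le _ _ _ _
      _ ≤ C i l + (minPlusPow C m l k + minPlusPow C n k j) := by gcongr; exact ih l
      _ = minPlusPow C (m + 1) i k + minPlusPow C n k j := by rw [hl, add_assoc]

lemma minPlusPow_add_const (a : ℚ) (n : ℕ) (i j : ι) :
    minPlusPow (fun i j => C i j + a) n i j =
      minPlusPow C n i j + ((n * a : ℚ) : WithTop ℚ) := by
  induction n generalizing i with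
  | zero =>
    by_cases hij : i = j
    · subst hij; simp [minPlusPow]
    · simp [minPlusPow, hij]
  | succ n ih =>
    simp only [minPlusPow, inf'_add_right]
    congr 1
    funext k
    rw [ih, Nat.cast_succ, add_one_mul, WithTop.coe_add]
    abel

lemma minPlusPow_le_sum_Ico (w : ℕ → ι) {s e : ℕ} (hse : s ≤ e) :
    minPlusPow C (e - s) (w e) (w s) ≤ ∑ t ∈ Ico s e, C (w (t + 1)) (w t) := by
  induction e, hse using Nat.le_induction with
  | base => simp
  | succ e hse ih =>
    rw [Nat.sub_add_comm hse, sum_Ico_succ_top hse, add_comm _ (C _ _)]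
    exact (minPlusPow_succ_le _ _ _ (w e)).trans (by gcongr)

lemma exists_walk_of_minPlusPow_ne_top {n : ℕ} {i j : ι} (h : minPlusPow C n i j ≠ ⊤) :
    ∃ w : ℕ → ι, w 0 = j ∧ w n = i ∧
      minPlusPow C n i j = ∑ t ∈ range n, C (w (t + 1)) (w t) := by
  induction n generalizing i with
  | zero =>
    obtain rfl : i = j := by_contra fun hij => h (minPlusPow_zero_of_ne hij)
    exact ⟨fun _ => i, rfl, rfl, by simp⟩
  | succ n ih =>
    obtain ⟨k, hk⟩ := exists_minPlusPow_succ_eq n i j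
    rw [hk] at h ⊢
    obtain ⟨w, hw0, hwn, hw⟩ := ih (WithTop.add_ne_top.mp h).2
    refine ⟨Function.update w (n + 1) i, by simp [hw0], by simp, ?_⟩
    rw [sum_range_succ, add_comm, hw]
    congr 1
    · refine sum_congr rfl fun t ht => ?_
      have ht := mem_range.mp ht
      rw [Function.update_of_ne (by omega), Function.update_of_ne (by omega)]
    · simp [hwn]

lemma exists_minPlusPow_sub_add_self_le {n : ℕ} {i j : ι} (hn : Fintype.card ι ≤ n)
    (h : minPlusPow C n i j ≠ ⊤) :
    ∃ c k, 0 < c ∧ c ≤ Fintype.card ι ∧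
      minPlusPow C (n - c) i j + minPlusPow C c k k ≤ minPlusPow C n i j := by
  obtain ⟨w, rfl, rfl, hw⟩ := exists_walk_of_minPlusPow_ne_top h
  obtain ⟨a, b, hab, hb, hwab⟩ := exists_lt_le_card_map_eq w
  have hbn : b ≤ n := hb.trans hn
  have hhead := minPlusPow_le_sum_Ico (C := C) w (Nat.zero_le a)
  have hcycle := minPlusPow_le_sum_Ico (C := C) w hab.le
  have htail := minPlusPow_le_sum_Ico (C := C) w hbn
  rw [← hwab] at hcycle htail
  refine ⟨b - a, w a, by omega, by omega, ?_⟩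
  calc minPlusPow C (n - (b - a)) (w n) (w 0) + minPlusPow C (b - a) (w a) (w a)
      ≤ minPlusPow C (n - b) (w n) (w a) + minPlusPow C (a - 0) (w a) (w 0) +
          minPlusPow C (b - a) (w a) (w a) := by
        gcongr
        rw [show n - (b - a) = n - b + (a - 0) by omega]
        exact minPlusPow_add_le _ _ _ _ _
    _ ≤ (∑ t ∈ Ico b n, C (w (t + 1)) (w t)) + (∑ t ∈ Ico 0 a, C (w (t + 1)) (w t)) +
          ∑ t ∈ Ico a b, C (w (t + 1)) (w t) := by gcongr
    _ = minPlusPow C n (w n) (w 0) := by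
        rw [hw, range_eq_Ico, ← sum_Ico_consecutive _ (Nat.zero_le b) hbn,
          ← sum_Ico_consecutive _ (Nat.zero_le a) hab.le]
        abel

/-- Only cycles of length at most `card ι` are constrained: longer ones decompose into these. -/
def NoNegativeCycle (C : Matrix ι ι (WithTop ℚ)) : Prop :=
  ∀ c k, 0 < c → c ≤ Fintype.card ι → 0 ≤ minPlusPow C c k k

lemma NoNegativeCycle.exists_minPlusPow_le (hcyc : NoNegativeCycle C) (i j : ι) {n : ℕ}
    (hn : 0 < n) :
    ∃ t, 0 < t ∧ t ≤ Fintype.card ι ∧ minPlusPow C t i j ≤ minPlusPow C n i j := by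
  induction n using Nat.strong_induction_on with
  | _ n ih =>
  by_cases hnc : n ≤ Fintype.card ι
  · exact ⟨n, hn, hnc, le_rfl⟩
  by_cases htop : minPlusPow C n i j = ⊤
  · exact ⟨1, one_pos, Fintype.card_pos (α := ι), htop ▸ le_top⟩
  obtain ⟨c, k, hc, hcard, hle⟩ := exists_minPlusPow_sub_add_self_le (by omega) htop
  obtain ⟨t, ht, htcard, hlt⟩ := ih (n - c) (by omega) (by omega)
  exact ⟨t, ht, htcard, hlt.trans ((le_add_of_nonneg_right (hcyc c k hc hcard)).trans hle)⟩

/-- The Kleene plus `C ⊕ C² ⊕ ⋯` truncated at `C ^ card ι`, which is all of it when `C` has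
no negative cycle. -/
def minPlusKleenePlus (C : Matrix ι ι (WithTop ℚ)) : Matrix ι ι (WithTop ℚ) := fun i j =>
  (Icc 1 (Fintype.card ι)).inf' (nonempty_Icc.mpr Fintype.card_pos) fun t => minPlusPow C t i j

lemma exists_minPlusKleenePlus_eq (i j : ι) :
    ∃ t, 0 < t ∧ minPlusKleenePlus C i j = minPlusPow C t i j := by
  obtain ⟨t, ht, h⟩ := exists_mem_eq_inf' (nonempty_Icc.mpr (Fintype.card_pos (α := ι)))
    fun t => minPlusPow C t i j
  exact ⟨t, (mem_Icc.mp ht).1, h⟩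

lemma NoNegativeCycle.minPlusKleenePlus_le_minPlusPow (hcyc : NoNegativeCycle C) {n : ℕ}
    (hn : 0 < n) (i j : ι) : minPlusKleenePlus C i j ≤ minPlusPow C n i j := by
  obtain ⟨t, ht, htcard, hle⟩ := hcyc.exists_minPlusPow_le i j hn
  exact (inf'_le _ (mem_Icc.mpr ⟨ht, htcard⟩)).trans hle

lemma NoNegativeCycle.minPlusKleenePlus_le_minPlusPow_of_critical (hcyc : NoNegativeCycle C)
    {k : ι} (hk : minPlusKleenePlus C k k ≤ 0) (n : ℕ) (i : ι) :
    minPlusKleenePlus C i k ≤ minPlusPow C n i k := by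
  rcases Nat.eq_zero_or_pos n with rfl | hn
  · by_cases hik : i = k
    · subst hik; simpa using hk
    · simp [minPlusPow_zero_of_ne hik]
  · exact hcyc.minPlusKleenePlus_le_minPlusPow hn i k

lemma NoNegativeCycle.inf'_add_minPlusKleenePlus_eq (hcyc : NoNegativeCycle C) {k : ι}
    (hk : minPlusKleenePlus C k k ≤ 0) (i : ι) :
    univ.inf' univ_nonempty (fun j => C i j + minPlusKleenePlus C j k) =
      minPlusKleenePlus C i k := by
  apply le_antisymm
  · obtain ⟨t, ht, hKt⟩ := exists_minPlusKleenePlus_eq i k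
    obtain ⟨s, rfl⟩ : ∃ s, t = s + 1 := ⟨t - 1, by omega⟩
    obtain ⟨j, hj⟩ := exists_minPlusPow_succ_eq s i k
    calc univ.inf' univ_nonempty (fun j => C i j + minPlusKleenePlus C j k)
        ≤ C i j + minPlusKleenePlus C j k := inf'_le _ (mem_univ j)
      _ ≤ C i j + minPlusPow C s j k := by
          gcongr; exact hcyc.minPlusKleenePlus_le_minPlusPow_of_critical hk s j
      _ = minPlusKleenePlus C i k := by rw [hKt, hj]
  · refine le_inf' _ _ fun j _ => ?_
    obtain ⟨t, -, hKt⟩ := exists_minPlusKleenePlus_eq j k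
    calc minPlusKleenePlus C i k ≤ minPlusPow C (t + 1) i k :=
          hcyc.minPlusKleenePlus_le_minPlusPow t.succ_pos i k
      _ ≤ C i j + minPlusPow C t j k := minPlusPow_succ_le t i k j
      _ = C i j + minPlusKleenePlus C j k := by rw [hKt]

lemma exists_minPlusPow_ne_top_of_reflTransGen {i j : ι}
    (h : Relation.ReflTransGen (fun a b => C b a ≠ ⊤) j i) :
    ∃ n, minPlusPow C n i j ≠ ⊤ := by
  induction h with
  | refl => exact ⟨0, by simp⟩
  | @tail b c _ hbc ih =>
    obtain ⟨n, hn⟩ := ih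
    exact ⟨n + 1, ne_top_of_le_ne_top (WithTop.add_ne_top.mpr ⟨hbc, hn⟩)
      (minPlusPow_succ_le n c j b)⟩

lemma exists_minPlusPow_self_ne_top {i j : ι} (hij : C i j ≠ ⊤)
    (hji : Relation.ReflTransGen (fun a b => C b a ≠ ⊤) i j) :
    ∃ c k, 0 < c ∧ c ≤ Fintype.card ι ∧ minPlusPow C c k k ≠ ⊤ := by
  obtain ⟨n, hn⟩ := exists_minPlusPow_ne_top_of_reflTransGen hji
  have hclosed : minPlusPow C (n + 1) i i ≠ ⊤ :=
    ne_top_of_le_ne_top (WithTop.add_ne_top.mpr ⟨hij, hn⟩) (minPlusPow_succ_le n i i j)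
  by_cases hcard : n + 1 ≤ Fintype.card ι
  · exact ⟨n + 1, i, n.succ_pos, hcard, hclosed⟩
  obtain ⟨c, k, hc, hccard, hle⟩ := exists_minPlusPow_sub_add_self_le (by omega) hclosed
  exact ⟨c, k, hc, hccard, fun htop => hclosed (top_le_iff.mp (by simpa [htop] using hle))⟩

/-- `Λ` is the least mean weight of a cycle, taken over the cycles of length at most `card ι`. -/
lemma exists_shift_noNegativeCycle_and_zero_cycle
    (hne : ∃ c k, 0 < c ∧ c ≤ Fintype.card ι ∧ minPlusPow C c k k ≠ ⊤) :
    ∃ Λ : ℚ, NoNegativeCycle (fun i j => C i j + ((-Λ : ℚ) : WithTop ℚ)) ∧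
      ∃ c k, 0 < c ∧ minPlusPow (fun i j => C i j + ((-Λ : ℚ) : WithTop ℚ)) c k k = 0 := by
  set S := (Icc 1 (Fintype.card ι) ×ˢ univ).filter
    fun p : ℕ × ι => minPlusPow C p.1 p.2 p.2 ≠ ⊤
  have hmem {c : ℕ} {k : ι} (hc : 0 < c) (hcard : c ≤ Fintype.card ι)
      (htop : minPlusPow C c k k ≠ ⊤) : (c, k) ∈ S := by
    simp [S, htop, hcard, Nat.one_le_iff_ne_zero.mpr hc.ne']
  obtain ⟨c, k, hc, hcard, htop⟩ := hne
  obtain ⟨p, hp, hmin⟩ := S.exists_min_image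
    (fun p => (minPlusPow C p.1 p.2 p.2).untopD 0 / p.1) ⟨_, hmem hc hcard htop⟩
  have hp1 : (0 : ℚ) < p.1 := by
    simp only [S, mem_filter, mem_product, mem_Icc] at hp
    exact_mod_cast hp.1.1.1
  refine ⟨(minPlusPow C p.1 p.2 p.2).untopD 0 / p.1, fun c k hc hcard => ?_, p.1, p.2, ?_, ?_⟩
  · rw [minPlusPow_add_const]
    by_cases htop : minPlusPow C c k k = ⊤
    · simp [htop]
    have hle := hmin _ (hmem hc hcard htop)
    obtain ⟨q, hq⟩ := WithTop.ne_top_iff_exists.mp htop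
    simp only [← hq, WithTop.untopD_coe] at hle ⊢
    rw [le_div_iff₀ (by exact_mod_cast hc)] at hle
    norm_cast
    linarith
  · exact_mod_cast hp1
  · rw [minPlusPow_add_const]
    obtain ⟨q, hq⟩ := WithTop.ne_top_iff_exists.mp (mem_filter.mp hp).2
    simp only [← hq, WithTop.untopD_coe]
    norm_cast
    field_simp
    ring

/-- min-plus spectral theorem, Proposition 3.6.
An irreducible tropical matrix with at least one finite entry has a rational
tropical eigenvalue `Λ` with an eigenvector `V ∈ ℚ^N`:
`min_j (C_{ij} + V_j) = Λ + V_i` for every `i`. -/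
theorem tropical_spectral_theorem (N : ℕ)
    (C : Matrix (Fin (N + 1)) (Fin (N + 1)) (WithTop ℚ))
    (hfin : ∃ i j, C i j ≠ ⊤) (hirr : TropIrreducible C) :
    ∃ (Λ : ℚ) (V : Fin (N + 1) → ℚ), ∀ i,
      Finset.univ.inf' Finset.univ_nonempty (fun j => C i j + (V j : WithTop ℚ)) =
        ((Λ + V i : ℚ) : WithTop ℚ) := by
  obtain ⟨i₀, j₀, hC⟩ := hfin
  obtain ⟨Λ, hcyc, c, k, hc, hcrit⟩ :=
    exists_shift_noNegativeCycle_and_zero_cycle (exists_minPlusPow_self_ne_top hC (hirr i₀ j₀))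
  set C' : Matrix (Fin (N + 1)) (Fin (N + 1)) (WithTop ℚ) :=
    fun i j => C i j + ((-Λ : ℚ) : WithTop ℚ)
  have hk : minPlusKleenePlus C' k k ≤ 0 := hcrit ▸ hcyc.minPlusKleenePlus_le_minPlusPow hc k k
  have hfinite (i) : minPlusKleenePlus C' i k ≠ ⊤ := by
    obtain ⟨n, hn⟩ := exists_minPlusPow_ne_top_of_reflTransGen (hirr k i)
    refine ne_top_of_le_ne_top ?_ (hcyc.minPlusKleenePlus_le_minPlusPow_of_critical hk n i)
    rw [minPlusPow_add_const]
    exact WithTop.add_ne_top.mpr ⟨hn, WithTop.coe_ne_top⟩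
  choose V hV using fun i => WithTop.ne_top_iff_exists.mp (hfinite i)
  refine ⟨Λ, V, fun i => ?_⟩
  have heig := hcyc.inf'_add_minPlusKleenePlus_eq hk i
  simp only [← hV] at heig
  calc univ.inf' univ_nonempty (fun j => C i j + (V j : WithTop ℚ))
      = univ.inf' univ_nonempty (fun j => C' i j + V j) + Λ := by
        rw [inf'_add_right]
        congr 1
        funext j
        simp only [C', add_assoc, ← WithTop.coe_add]
        congr 2
        ring
    _ = ((Λ + V i : ℚ) : WithTop ℚ) := by rw [heig, add_comm]; norm_cast
end

section
/- Let C be an irreducible N×N tropical (min-plus) matrix over 𝕋 = ℚ ∪ {+∞} with at least one finite entry. Then the tropical eigenvalue of C equals the minimum over all directed cycles γ in the adjacency digraph of C of (weight of γ)/(length of γ), and this eigenvalue is unique. -/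
/-- `Λ` is a tropical eigenvalue of `C`: there is a vector `V`, not identically `+∞`,
with `min_j (C_{ij} + V_j) = Λ + V_i` for all `i`. -/
def IsTropEigenvalue {N : ℕ} (C : Matrix (Fin (N + 1)) (Fin (N + 1)) (WithTop ℚ))
    (Λ : WithTop ℚ) : Prop :=
  ∃ V : Fin (N + 1) → WithTop ℚ, V ≠ (fun _ => ⊤) ∧
    ∀ i, Finset.univ.inf' Finset.univ_nonempty (fun j => C i j + V j) = Λ + V i

/-- The set of cycle means of the adjacency digraph of `C`: rationals `q` such that some
directed closed path `γ` of length `k > 0` (all of whose arcs are finite) has total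
weight `∑_{m<k} C_{γ(m+1), γ(m)} = k·q`. -/
def CycleMeans {N : ℕ} (C : Matrix (Fin (N + 1)) (Fin (N + 1)) (WithTop ℚ)) : Set ℚ :=
  {q | ∃ (k : ℕ) (γ : ℕ → Fin (N + 1)), 0 < k ∧ γ k = γ 0 ∧
    (∑ m ∈ Finset.range k, C (γ (m + 1)) (γ m)) = (((k : ℚ) * q : ℚ) : WithTop ℚ)}

/-!
Let `V` be a tropical eigenvector for `Λ`. Every arc `j → i` gives `Λ + V i ≤ C i j + V j`, so
finiteness of `V` propagates along arcs and, by irreducibility, `V` and then `Λ` are finite.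
Summing the arc inequalities around a cycle, the potential `V` telescopes away: `Λ` is at most
every cycle mean. Choosing for each `i` an index `σ i` attaining the minimum, a periodic orbit of
`σ` traversed backwards is a cycle on which all these inequalities are equalities, so its mean
is `Λ`. Hence `Λ` is the least cycle mean, which also determines it uniquely.
-/

open Finset Function

theorem sum_range_succ_eq_sum_range_of_eq {M : Type*} [AddCommMonoid M] (g : ℕ → M) {k : ℕ}
    (h : g k = g 0) : ∑ m ∈ range k, g (m + 1) = ∑ m ∈ range k, g m := by
  cases k with
  | zero => rfl
  | succ n => rw [sum_range_succ, h, sum_range_succ']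

theorem Function.periodicPts_nonempty {α : Type*} [Finite α] [Nonempty α] (f : α → α) :
    (periodicPts f).Nonempty := by
  obtain ⟨x⟩ := ‹Nonempty α›
  obtain ⟨m, n, hne, heq⟩ := Finite.exists_ne_map_eq_of_infinite (f^[·] x)
  wlog hlt : m < n generalizing m n
  · exact this n m hne.symm heq.symm (by omega)
  refine ⟨f^[m] x, mk_mem_periodicPts (n := n - m) (by omega) ?_⟩
  rw [IsPeriodicPt, IsFixedPt, ← iterate_add_apply, Nat.sub_add_cancel hlt.le]
  exact heq.symm

theorem Function.IsPeriodicPt.exists_backward_orbit {α : Type*} {f : α → α} {k : ℕ} {y : α}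
    (hy : IsPeriodicPt f k y) : ∃ γ : ℕ → α, γ k = γ 0 ∧ ∀ m < k, γ m = f (γ (m + 1)) := by
  refine ⟨fun m => f^[k - m] y, by simpa using hy.eq.symm, fun m hm => ?_⟩
  simp only [show k - m = k - (m + 1) + 1 by omega, iterate_succ_apply']

section Subeigenvector

variable {ι : Type*} {C : Matrix ι ι (WithTop ℚ)} {V : ι → WithTop ℚ} {Λ : WithTop ℚ}

theorem add_ne_top_of_arc (hsub : ∀ i j, Λ + V i ≤ C i j + V j) {i j : ι} (hC : C i j ≠ ⊤)
    (hj : V j ≠ ⊤) : Λ + V i ≠ ⊤ :=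
  ne_top_of_le_ne_top (WithTop.add_ne_top.2 ⟨hC, hj⟩) (hsub i j)

theorem ne_top_of_reflTransGen (hsub : ∀ i j, Λ + V i ≤ C i j + V j) {i j : ι}
    (h : Relation.ReflTransGen (fun a b => C b a ≠ ⊤) j i) (hj : V j ≠ ⊤) : V i ≠ ⊤ := by
  induction h with
  | refl => exact hj
  | tail _ hab ih => exact (WithTop.add_ne_top.1 (add_ne_top_of_arc hsub hab ih)).2

theorem nsmul_le_sum_cycle (hsub : ∀ i j, Λ + V i ≤ C i j + V j) (hV : ∀ i, V i ≠ ⊤)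
    {k : ℕ} {γ : ℕ → ι} (hγ : γ k = γ 0) :
    k • Λ ≤ ∑ m ∈ range k, C (γ (m + 1)) (γ m) := by
  have h := sum_le_sum fun m (_ : m ∈ range k) => hsub (γ (m + 1)) (γ m)
  rw [sum_add_distrib, sum_add_distrib, sum_const, card_range,
    sum_range_succ_eq_sum_range_of_eq (fun m => V (γ m)) (congrArg V hγ)] at h
  exact (WithTop.add_le_add_iff_right (WithTop.sum_ne_top.2 fun m _ => hV (γ m))).1 h

theorem sum_cycle_eq_nsmul (hV : ∀ i, V i ≠ ⊤) {k : ℕ} {γ : ℕ → ι} (hγ : γ k = γ 0)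
    (htight : ∀ m < k, C (γ (m + 1)) (γ m) + V (γ m) = Λ + V (γ (m + 1))) :
    ∑ m ∈ range k, C (γ (m + 1)) (γ m) = k • Λ := by
  have h := sum_congr rfl fun m (hm : m ∈ range k) => htight m (mem_range.1 hm)
  rw [sum_add_distrib, sum_add_distrib, sum_const, card_range,
    sum_range_succ_eq_sum_range_of_eq (fun m => V (γ m)) (congrArg V hγ)] at h
  exact (WithTop.add_right_inj (WithTop.sum_ne_top.2 fun m _ => hV (γ m))).1 h

end Subeigenvector

section Eigenvector

variable {N : ℕ} {C : Matrix (Fin (N + 1)) (Fin (N + 1)) (WithTop ℚ)}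
  {V : Fin (N + 1) → WithTop ℚ} {Λ : WithTop ℚ}

theorem add_le_of_eigenvector
    (hV : ∀ i, univ.inf' univ_nonempty (fun j => C i j + V j) = Λ + V i) (i j : Fin (N + 1)) :
    Λ + V i ≤ C i j + V j :=
  hV i ▸ inf'_le _ (mem_univ j)

theorem le_of_mem_cycleMeans {lam : ℚ}
    (hV : ∀ i, univ.inf' univ_nonempty (fun j => C i j + V j) = lam + V i)
    (hVfin : ∀ i, V i ≠ ⊤) {q : ℚ} (hq : q ∈ CycleMeans C) : lam ≤ q := by
  obtain ⟨k, γ, hk, hγ, hsum⟩ := hq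
  have h := nsmul_le_sum_cycle (add_le_of_eigenvector hV) hVfin hγ
  rw [hsum, ← WithTop.coe_nsmul, WithTop.coe_le_coe, nsmul_eq_mul] at h
  exact le_of_mul_le_mul_left h (by exact_mod_cast hk)

theorem mem_cycleMeans_of_eigenvector {lam : ℚ}
    (hV : ∀ i, univ.inf' univ_nonempty (fun j => C i j + V j) = lam + V i)
    (hVfin : ∀ i, V i ≠ ⊤) : lam ∈ CycleMeans C := by
  choose σ _ hσ using fun i => exists_mem_eq_inf' univ_nonempty (fun j => C i j + V j)
  obtain ⟨y, hy⟩ := periodicPts_nonempty σ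
  obtain ⟨k, hk, hyk⟩ := mem_periodicPts.1 hy
  obtain ⟨γ, hγ, hstep⟩ := hyk.exists_backward_orbit
  refine ⟨k, γ, hk, hγ, ?_⟩
  rw [sum_cycle_eq_nsmul hVfin hγ fun m hm => by rw [hstep m hm, ← hσ, hV],
    ← WithTop.coe_nsmul, nsmul_eq_mul]

end Eigenvector

theorem IsTropEigenvalue.exists_eq_coe_isLeast_cycleMeans {N : ℕ}
    {C : Matrix (Fin (N + 1)) (Fin (N + 1)) (WithTop ℚ)} (hfin : ∃ i j, C i j ≠ ⊤)
    (hirr : TropIrreducible C) {Λ : WithTop ℚ} (hΛ : IsTropEigenvalue C Λ) :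
    ∃ q : ℚ, Λ = q ∧ IsLeast (CycleMeans C) q := by
  obtain ⟨V, hVne, hV⟩ := hΛ
  have hsub := add_le_of_eigenvector hV
  obtain ⟨j, hj⟩ : ∃ j, V j ≠ ⊤ := by
    by_contra! h
    exact hVne (funext h)
  have hVfin : ∀ i, V i ≠ ⊤ := fun i => ne_top_of_reflTransGen hsub (hirr j i) hj
  obtain ⟨a, b, hab⟩ := hfin
  obtain ⟨lam, rfl⟩ := WithTop.ne_top_iff_exists.1
    (WithTop.add_ne_top.1 (add_ne_top_of_arc hsub hab (hVfin b))).1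
  exact ⟨lam, rfl, mem_cycleMeans_of_eigenvector hV hVfin,
    fun q hq => le_of_mem_cycleMeans hV hVfin hq⟩

/-- tropical eigenvalue = minimal cycle mean, and uniqueness.
For an irreducible tropical matrix with a finite entry, any tropical eigenvalue `Λ`
is the minimum of the cycle means, and the tropical eigenvalue is unique. -/
theorem tropical_eigenvalue_eq_min_cycle_mean (N : ℕ)
    (C : Matrix (Fin (N + 1)) (Fin (N + 1)) (WithTop ℚ))
    (hfin : ∃ i j, C i j ≠ ⊤) (hirr : TropIrreducible C)
    (Λ : WithTop ℚ) (hΛ : IsTropEigenvalue C Λ) :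
    (∃ q : ℚ, Λ = (q : WithTop ℚ) ∧ IsLeast (CycleMeans C) q) ∧
    (∀ Λ' : WithTop ℚ, IsTropEigenvalue C Λ' → Λ' = Λ) := by
  obtain ⟨q, rfl, hq⟩ := hΛ.exists_eq_coe_isLeast_cycleMeans hfin hirr
  refine ⟨⟨q, rfl, hq⟩, fun Λ' hΛ' => ?_⟩
  obtain ⟨q', rfl, hq'⟩ := hΛ'.exists_eq_coe_isLeast_cycleMeans hfin hirr
  rw [hq'.unique hq]
end

section
/- Let C be an irreducible N×N tropical (min-plus) matrix with at least one finite entry and eigenvalue Λ. Then there exist rationals V_1,…,V_N such that the matrix C' with entries C'_{ij} = C_{ij} + V_j − V_i satisfies min_j C'_{ij} = Λ for every row i. -/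
/-- Corollary 3.6: row minima of the conjugated matrix.
If `C` is irreducible with a finite entry and tropical eigenvalue `Λ`, then there are
rationals `V_1, …, V_N` so that the conjugated matrix `C'_{ij} = C_{ij} + V_j − V_i`
has every row minimum equal to `Λ`. -/
theorem tropical_diagonal_conjugation (N : ℕ)
    (C : Matrix (Fin (N + 1)) (Fin (N + 1)) (WithTop ℚ))
    (hfin : ∃ i j, C i j ≠ ⊤) (hirr : TropIrreducible C)
    (Λ : ℚ) (hΛ : IsTropEigenvalue C (Λ : WithTop ℚ)) :
    ∃ V : Fin (N + 1) → ℚ, ∀ i,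
      Finset.univ.inf' Finset.univ_nonempty
        (fun j => C i j + ((V j - V i : ℚ) : WithTop ℚ)) = (Λ : WithTop ℚ) := by
  obtain ⟨V, hV, heig⟩ := hΛ
  -- Step 1: propagate finiteness of `V` along paths.
  have key : ∀ a b : Fin (N + 1), Relation.ReflTransGen (fun a b => C b a ≠ ⊤) a b →
      V b = ⊤ → V a = ⊤ := by
    intro a b h
    induction h with
    | refl => exact id
    | tail hab harc ih =>
        rename_i b' c
        intro hc
        apply ih
        have h1 : Finset.univ.inf' Finset.univ_nonempty (fun j => C c j + V j) = ⊤ := by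
          rw [heig c, hc, add_top]
        have h2 : C c b' + V b' = ⊤ := by
          have : Finset.univ.inf' Finset.univ_nonempty (fun j => C c j + V j)
              ≤ C c b' + V b' :=
            Finset.inf'_le _ (Finset.mem_univ b')
          rw [h1] at this
          exact top_le_iff.mp this
        rcases WithTop.add_eq_top.mp h2 with h | h
        · exact absurd h harc
        · exact h
  -- Step 2: all entries of `V` are finite.
  obtain ⟨j₀, hj₀⟩ : ∃ j, V j ≠ ⊤ := by
    by_contra h
    push_neg at h
    exact hV (funext fun j => h j)
  have hne : ∀ i, V i ≠ ⊤ := fun i hi => hj₀ (key j₀ i (hirr j₀ i) hi)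
  -- Step 3: extract the rational values.
  choose Vq hVq using fun i => WithTop.ne_top_iff_exists.mp (hne i)
  refine ⟨Vq, fun i => ?_⟩
  have heq : Finset.univ.inf' Finset.univ_nonempty (fun j => C i j + V j)
      = ((Λ + Vq i : ℚ) : WithTop ℚ) := by
    rw [heig i, ← hVq i, WithTop.coe_add]
  apply le_antisymm
  · -- some j₀' attains the min
    obtain ⟨k, -, hk⟩ := Finset.exists_mem_eq_inf' (Finset.univ_nonempty)
      (fun j => C i j + V j)
    rw [hk] at heq
    have hCk : C i k ≠ ⊤ := by
      intro h
      rw [h, top_add] at heq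
      exact (WithTop.coe_ne_top heq.symm).elim
    obtain ⟨c, hc⟩ := WithTop.ne_top_iff_exists.mp hCk
    rw [← hc, ← hVq k, ← WithTop.coe_add, WithTop.coe_inj] at heq
    have : C i k + ((Vq k - Vq i : ℚ) : WithTop ℚ) = ((Λ : ℚ) : WithTop ℚ) := by
      rw [← hc, ← WithTop.coe_add, WithTop.coe_inj]
      linarith
    calc Finset.univ.inf' Finset.univ_nonempty
          (fun j => C i j + ((Vq j - Vq i : ℚ) : WithTop ℚ))
        ≤ C i k + ((Vq k - Vq i : ℚ) : WithTop ℚ) :=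
          Finset.inf'_le _ (Finset.mem_univ k)
      _ = ((Λ : ℚ) : WithTop ℚ) := this
  · -- lower bound
    apply Finset.le_inf'
    intro j _
    rcases eq_or_ne (C i j) ⊤ with h | h
    · rw [h, top_add]; exact le_top
    · obtain ⟨c, hc⟩ := WithTop.ne_top_iff_exists.mp h
      have hle : ((Λ + Vq i : ℚ) : WithTop ℚ) ≤ C i j + V j := by
        rw [← heq]
        exact Finset.inf'_le _ (Finset.mem_univ j)
      rw [← hc, ← hVq j, ← WithTop.coe_add, WithTop.coe_le_coe] at hle
      rw [← hc, ← WithTop.coe_add, WithTop.coe_le_coe]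
      linarith
end

section
/- Let Z be an (n+m)×(n+m) block matrix over an ordered field, Z = [[A, 0],[P, W]] + E where A is n×n, W is m×m, P is m×n nonnegative, and E has entries of strictly higher valuation (over the Puiseux field). Suppose Ax = λx with x positive and λ − W invertible with nonnegative inverse, and λ strictly exceeds every eigenvalue of W in absolute value. Then the vector p = x ⊕ (λ − W)⁻¹Px satisfies Z p = λ p + o(terms of higher valuation), and p is nonnegative. -/
namespace Matrix

variable {ι κ R : Type*} [Fintype κ]

theorem mulVec_nonneg [Semiring R] [PartialOrder R] [IsOrderedRing R] {A : Matrix ι κ R}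
    (hA : ∀ i j, 0 ≤ A i j) {v : κ → R} (hv : 0 ≤ v) : 0 ≤ A *ᵥ v :=
  fun i => Finset.sum_nonneg fun j _ => mul_nonneg (hA i j) (hv j)

theorem fromBlocks_zero₁₂_mulVec_sumElim_eq_smul [Fintype ι] [DecidableEq κ] [Ring R]
    {A : Matrix ι ι R} {P : Matrix κ ι R} {W : Matrix κ κ R} {l : R} {x : ι → R} {y : κ → R}
    (hA : A *ᵥ x = l • x) (hy : (l • (1 : Matrix κ κ R) - W) *ᵥ y = P *ᵥ x) :
    fromBlocks A 0 P W *ᵥ Sum.elim x y = l • Sum.elim x y := by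
  rw [sub_mulVec, smul_mulVec, one_mulVec] at hy
  rw [fromBlocks_mulVec, zero_mulVec, add_zero, Sum.elim_comp_inl, Sum.elim_comp_inr, hA, ← hy,
    sub_add_cancel]
  ext (i | i) <;> rfl

end Matrix

theorem process_B_glued_eigenvector_general (F : Type*) [Field F] [LinearOrder F] [IsStrictOrderedRing F] (n m : ℕ)
    (A : Matrix (Fin n) (Fin n) F) (W : Matrix (Fin m) (Fin m) F)
    (P : Matrix (Fin m) (Fin n) F) (hP : ∀ i j, 0 ≤ P i j)
    (l : F) (x : Fin n → F) (hx : ∀ i, 0 < x i) (hA : A.mulVec x = l • x)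
    (M : Matrix (Fin m) (Fin m) F)
    (hM1 : (l • (1 : Matrix (Fin m) (Fin m) F) - W) * M = 1)
    (hMnn : ∀ i j, 0 ≤ M i j) :
    (Matrix.fromBlocks A 0 P W).mulVec (Sum.elim x (M.mulVec (P.mulVec x))) =
        l • Sum.elim x (M.mulVec (P.mulVec x)) ∧
    ∀ i, 0 ≤ Sum.elim x (M.mulVec (P.mulVec x)) i := by
  have hx₀ : 0 ≤ x := fun i => (hx i).le
  refine ⟨Matrix.fromBlocks_zero₁₂_mulVec_sumElim_eq_smul hA ?_, ?_⟩
  · rw [Matrix.mulVec_mulVec, hM1, Matrix.one_mulVec]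
  · rintro (i | i)
    · exact hx₀ i
    · exact Matrix.mulVec_nonneg hMnn (Matrix.mulVec_nonneg hP hx₀) i

/-- equation (26) in Process B: the glued approximate Perron vector.
Over an ordered field, let `Z₀ = [[A, 0], [P, W]]` be a block lower-triangular matrix
with `P` nonnegative, let `x > 0` satisfy `A·x = λ·x`, and suppose `λ·Id − W` has a
nonnegative (two-sided) inverse `M` and `λ` strictly dominates in modulus every
eigenvalue `a + b√−1` of `W` over `F[X]/(X²+1)`.  Then the vector
`p = x ⊕ (λ − W)⁻¹·P·x` is nonnegative and satisfies `Z₀·p = λ·p` (so that for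
`Z = Z₀ + E` with `E` of higher valuation, `Z·p = λ·p + o(higher-order terms)`). -/
theorem process_B_glued_eigenvector (F : Type*) [Field F] [LinearOrder F] [IsStrictOrderedRing F] (n m : ℕ)
    (A : Matrix (Fin n) (Fin n) F) (W : Matrix (Fin m) (Fin m) F)
    (P : Matrix (Fin m) (Fin n) F) (hP : ∀ i j, 0 ≤ P i j)
    (l : F) (x : Fin n → F) (hx : ∀ i, 0 < x i) (hA : A.mulVec x = l • x)
    (M : Matrix (Fin m) (Fin m) F)
    (hM1 : (l • (1 : Matrix (Fin m) (Fin m) F) - W) * M = 1)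
    (hM2 : M * (l • (1 : Matrix (Fin m) (Fin m) F) - W) = 1)
    (hMnn : ∀ i j, 0 ≤ M i j)
    (hspec : ∀ a b : F,
      Polynomial.aeval
          (algebraMap F (AdjoinRoot (Polynomial.X ^ 2 + 1 : Polynomial F)) a +
            algebraMap F (AdjoinRoot (Polynomial.X ^ 2 + 1 : Polynomial F)) b *
              AdjoinRoot.root (Polynomial.X ^ 2 + 1 : Polynomial F))
          W.charpoly = 0 →
        a ^ 2 + b ^ 2 < l ^ 2) :
    (Matrix.fromBlocks A 0 P W).mulVec (Sum.elim x (M.mulVec (P.mulVec x))) =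
        l • Sum.elim x (M.mulVec (P.mulVec x)) ∧
    ∀ i, 0 ≤ Sum.elim x (M.mulVec (P.mulVec x)) i :=
  process_B_glued_eigenvector_general F n m A W P hP l x hx hA M hM1 hMnn
end

section
/- Let Z_V be an N×N complex matrix with a simple eigenvalue μ_V, with right eigenvector x_0 and left eigenvector w normalized so that wᵀx_0 = 1 and such that wᵀz = 0 iff z ∈ Im(Z_V − μ_V). Given matrices Z_{V+1}, Z_{V+2}, … and defining recursively μ_{V+n} := wᵀ(Z_{V+n}x_0 + ∑_{i=1}^{n−1}(Z_{V+i} − μ_{V+i})x_{n−i}) and x_n := −f(∑_{i=1}^{n}(Z_{V+i} − μ_{V+i})x_{n−i}) where f is a right inverse of (Z_V − μ_V) on its image, the correction terms satisfy ∑_{i=1}^{n}(Z_{V+i} − μ_{V+i})x_{n−i} ∈ Im(Z_V − μ_V) for all n ≥ 1, so the recursion is well defined. -/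
/-!
The last summand of the correction sum is `(Z n - μ n) (x 0)`; splitting it off, the sum becomes
`v - (wᵀ v) • x 0` with `v = Z n (x 0) + ∑_{i<n} …`, because `μ n` is defined as `wᵀ v`.
Since `wᵀ (x 0) = 1`, this vector is annihilated by `wᵀ`, hence lies in `Im (Z 0 − μ 0)`.
-/

theorem dotProduct_sub_dotProduct_smul_eq_zero {R ι : Type*} [CommRing R] [Fintype ι]
    {w x₀ : ι → R} (hnorm : w ⬝ᵥ x₀ = 1) (v : ι → R) :
    w ⬝ᵥ (v - (w ⬝ᵥ v) • x₀) = 0 := by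
  rw [dotProduct_sub, dotProduct_smul, hnorm, smul_eq_mul, mul_one, sub_self]

theorem perturbation_recursion_well_defined_general (N : ℕ)
    (Z : ℕ → Matrix (Fin N) (Fin N) ℂ) (μ : ℕ → ℂ)
    (x : ℕ → Fin N → ℂ) (w : Fin N → ℂ)
    (hnorm : dotProduct w (x 0) = 1)
    (him : ∀ z : Fin N → ℂ,
      dotProduct w z = 0 ↔ ∃ u, (Z 0).mulVec u - μ 0 • u = z)
    (hμ : ∀ n, 1 ≤ n → μ n = dotProduct w ((Z n).mulVec (x 0) +
      ∑ i ∈ Finset.Ico 1 n, ((Z i).mulVec (x (n - i)) - μ i • x (n - i)))) :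
    ∀ n, 1 ≤ n → ∃ u : Fin N → ℂ, (Z 0).mulVec u - μ 0 • u =
      ∑ i ∈ Finset.Icc 1 n, ((Z i).mulVec (x (n - i)) - μ i • x (n - i)) := by
  intro n hn
  rw [← him, ← Finset.Ico_add_one_right_eq_Icc, Finset.sum_Ico_succ_top hn, Nat.sub_self]
  set lower := ∑ i ∈ Finset.Ico 1 n, ((Z i).mulVec (x (n - i)) - μ i • x (n - i))
  have hsum : lower + ((Z n).mulVec (x 0) - μ n • x 0) = ((Z n).mulVec (x 0) + lower) -
      (w ⬝ᵥ ((Z n).mulVec (x 0) + lower)) • x 0 := by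
    rw [← hμ n hn]
    abel
  rw [hsum]
  exact dotProduct_sub_dotProduct_smul_eq_zero hnorm _

/-- Lemma 2.8: well-definedness of the simple-eigenvalue recursion.
Let `Z 0` have a simple eigenvalue `μ 0` with right eigenvector `x 0` and left
eigenvector `w`, normalized by `wᵀ(x 0) = 1` and such that `wᵀz = 0` iff
`z ∈ Im (Z 0 − μ 0)`.  Let `f` be a right inverse of `Z 0 − μ 0` on its image, and
define recursively
`μ n = wᵀ(Z n (x 0) + ∑_{i=1}^{n−1} (Z i − μ i)(x (n−i)))` and
`x n = −f (∑_{i=1}^{n} (Z i − μ i)(x (n−i)))`.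
Then for every `n ≥ 1` the vector `∑_{i=1}^{n} (Z i − μ i)(x (n−i))` lies in
`Im (Z 0 − μ 0)`, so the recursion is well defined. -/
theorem perturbation_recursion_well_defined (N : ℕ)
    (Z : ℕ → Matrix (Fin N) (Fin N) ℂ) (μ : ℕ → ℂ)
    (x : ℕ → Fin N → ℂ) (w : Fin N → ℂ)
    (f : (Fin N → ℂ) → (Fin N → ℂ))
    (hright : (Z 0).mulVec (x 0) = μ 0 • x 0)
    (hleft : (Z 0).transpose.mulVec w = μ 0 • w)
    (hnorm : dotProduct w (x 0) = 1)
    (him : ∀ z : Fin N → ℂ,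
      dotProduct w z = 0 ↔ ∃ u, (Z 0).mulVec u - μ 0 • u = z)
    (hf : ∀ z : Fin N → ℂ, (∃ u, (Z 0).mulVec u - μ 0 • u = z) →
      (Z 0).mulVec (f z) - μ 0 • f z = z)
    (hμ : ∀ n, 1 ≤ n → μ n = dotProduct w ((Z n).mulVec (x 0) +
      ∑ i ∈ Finset.Ico 1 n, ((Z i).mulVec (x (n - i)) - μ i • x (n - i))))
    (hx : ∀ n, 1 ≤ n → x n =
      -f (∑ i ∈ Finset.Icc 1 n, ((Z i).mulVec (x (n - i)) - μ i • x (n - i)))) :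
    ∀ n, 1 ≤ n → ∃ u : Fin N → ℂ, (Z 0).mulVec u - μ 0 • u =
      ∑ i ∈ Finset.Icc 1 n, ((Z i).mulVec (x (n - i)) - μ i • x (n - i)) :=
  perturbation_recursion_well_defined_general N Z μ x w hnorm him hμ
end
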